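/- arXiv:2306.15906 — 7 statements merged into one kernel-verified Lean document; each statement's English description precedes it below -/
import Mathlib

section
/- Let F : Y → 𝒢₊(Z) and G : X → 𝒫₊(Y) be set-valued maps. If F and G are both convex, then the composition F∘G is convex: λ(F∘G)(x¹) + (1−λ)(F∘G)(x²) ⊆ (F∘G)(λx¹ + (1−λ)x²) for all x¹, x² ∈ X and λ ∈ [0,1]. -/
open Set Pointwise

/-- The composition of two set-valued maps:
`(F ∘ G)(x) := cl co (⋃ y ∈ G x, F y)`. -/
noncomputable def svComp {X Y Z : Type*} [AddCommGroup Z] [Module ℝ Z] [TopologicalSpace Z]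
    (F : Y → Set Z) (G : X → Set Y) (x : X) : Set Z :=
  closure (convexHull ℝ (⋃ y ∈ G x, F y))

/-- A set-valued map is convex if
`λ R(x¹) + (1-λ) R(x²) ⊆ R(λ x¹ + (1-λ) x²)` for all `x¹, x²` and `λ ∈ [0,1]`. -/
def SVConvex {X Z : Type*} [AddCommGroup X] [Module ℝ X] [AddCommGroup Z] [Module ℝ Z]
    (R : X → Set Z) : Prop :=
  ∀ x1 x2 : X, ∀ l ∈ Set.Icc (0 : ℝ) 1,
    l • R x1 + (1 - l) • R x2 ⊆ R (l • x1 + (1 - l) • x2)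

/- Convexity of `F` and `G` passes to `x ↦ ⋃ y ∈ G x, F y`: combine `y¹, y²` in `G`, then points
of `F y¹, F y²` in `F`. Closed convex hulls preserve this, since the convex hull commutes with
scaling and Minkowski sums and closure is compatible with both. -/

theorem closure_add_closure_subset {M : Type*} [TopologicalSpace M] [Add M] [ContinuousAdd M]
    (s t : Set M) : closure s + closure t ⊆ closure (s + t) := by
  rintro _ ⟨a, ha, b, hb, rfl⟩
  exact map_mem_closure₂ continuous_add ha hb fun _ hx _ hy => add_mem_add hx hy

theorem smul_add_smul_closure_convexHull_subset {𝕜 E : Type*} [Field 𝕜] [LinearOrder 𝕜]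
    [IsStrictOrderedRing 𝕜] [AddCommGroup E] [Module 𝕜 E] [TopologicalSpace E] [ContinuousAdd E]
    [ContinuousConstSMul 𝕜 E] {s t u : Set E} {a b : 𝕜} (h : a • s + b • t ⊆ u) :
    a • closure (convexHull 𝕜 s) + b • closure (convexHull 𝕜 t) ⊆ closure (convexHull 𝕜 u) :=
  calc a • closure (convexHull 𝕜 s) + b • closure (convexHull 𝕜 t)
      ⊆ closure (a • convexHull 𝕜 s) + closure (b • convexHull 𝕜 t) :=
        add_subset_add (smul_closure_subset a _) (smul_closure_subset b _)
    _ ⊆ closure (a • convexHull 𝕜 s + b • convexHull 𝕜 t) := closure_add_closure_subset _ _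
    _ = closure (convexHull 𝕜 (a • s + b • t)) := by
        rw [convexHull_add, convexHull_smul, convexHull_smul]
    _ ⊆ closure (convexHull 𝕜 u) := closure_mono (convexHull_mono h)

theorem SVConvex.smul_add_smul_biUnion_subset {X Y Z : Type*} [AddCommGroup X] [Module ℝ X]
    [AddCommGroup Y] [Module ℝ Y] [AddCommGroup Z] [Module ℝ Z] {F : Y → Set Z} {G : X → Set Y}
    (hF : SVConvex F) (hG : SVConvex G) (x1 x2 : X) {l : ℝ} (hl : l ∈ Icc (0 : ℝ) 1) :
    l • (⋃ y ∈ G x1, F y) + (1 - l) • (⋃ y ∈ G x2, F y) ⊆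
      ⋃ y ∈ G (l • x1 + (1 - l) • x2), F y := by
  rintro _ ⟨_, ⟨z1, hz1, rfl⟩, _, ⟨z2, hz2, rfl⟩, rfl⟩
  obtain ⟨y1, hy1, hz1⟩ := mem_iUnion₂.1 hz1
  obtain ⟨y2, hy2, hz2⟩ := mem_iUnion₂.1 hz2
  exact mem_iUnion₂.2 ⟨l • y1 + (1 - l) • y2,
    hG x1 x2 l hl (add_mem_add (smul_mem_smul_set hy1) (smul_mem_smul_set hy2)),
    hF y1 y2 l hl (add_mem_add (smul_mem_smul_set hz1) (smul_mem_smul_set hz2))⟩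

theorem stmt_2_general {X Y Z : Type*}
    [AddCommGroup X] [Module ℝ X]
    [AddCommGroup Y] [Module ℝ Y]
    [AddCommGroup Z] [Module ℝ Z] [TopologicalSpace Z] [IsTopologicalAddGroup Z]
    [ContinuousSMul ℝ Z]
    (F : Y → Set Z)
    (G : X → Set Y)
    (hFconv : SVConvex F) (hGconv : SVConvex G) :
    SVConvex (svComp F G) := fun x1 x2 _ hl =>
  smul_add_smul_closure_convexHull_subset (hFconv.smul_add_smul_biUnion_subset hGconv x1 x2 hl)

/-- If `F` and `G` are convex set-valued maps, then so is their
composition `F ∘ G`. -/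
theorem stmt_2 {X Y Z : Type*}
    [AddCommGroup X] [Module ℝ X] [TopologicalSpace X] [IsTopologicalAddGroup X]
    [ContinuousSMul ℝ X] [LocallyConvexSpace ℝ X] [T2Space X]
    [AddCommGroup Y] [Module ℝ Y] [TopologicalSpace Y] [IsTopologicalAddGroup Y]
    [ContinuousSMul ℝ Y] [LocallyConvexSpace ℝ Y] [T2Space Y]
    [AddCommGroup Z] [Module ℝ Z] [TopologicalSpace Z] [IsTopologicalAddGroup Z]
    [ContinuousSMul ℝ Z] [LocallyConvexSpace ℝ Z] [T2Space Z]
    (Yp : Set Y) (hYpconv : Convex ℝ Yp) (hYp0 : (0 : Y) ∈ Yp)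
    (hYpcone : ∀ c : ℝ, 0 < c → c • Yp ⊆ Yp) (hYpcl : IsClosed Yp)
    (Zp : Set Z) (hZpconv : Convex ℝ Zp) (hZp0 : (0 : Z) ∈ Zp)
    (hZpcone : ∀ c : ℝ, 0 < c → c • Zp ⊆ Zp) (hZpcl : IsClosed Zp)
    -- `F` maps into 𝒢₊(Z) and `G` maps into 𝒫₊(Y)
    (F : Y → Set Z) (hF : ∀ y, F y = closure (convexHull ℝ (F y + Zp)))
    (G : X → Set Y) (hG : ∀ x, G x + Yp = G x)
    (hFconv : SVConvex F) (hGconv : SVConvex G) :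
    SVConvex (svComp F G) :=
  stmt_2_general F G hFconv hGconv
end

section
/- Let F : Y → 𝒢₊(Z) and G : X → 𝒫₊(Y) be set-valued maps. Then for every z* ∈ Z₊⁺ \ {0} and every x ∈ X, the scalarization of the composition satisfies φ_{F∘G,z*}(x) = inf_{y ∈ G(x)} φ_{F,z*}(y) (equality in the extended reals). -/
open Set Pointwise

/-- The scalarization `φ_{R,l}(x) := inf_{z ∈ R(x)} l(z)` of a set-valued map, as an
extended-real-valued function (the infimum over the empty set is `+∞`). -/
noncomputable def scal {X Z : Type*} (R : X → Set Z) (l : Z → ℝ) (x : X) : EReal :=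
  ⨅ z ∈ R x, ((l z : ℝ) : EReal)

theorem iInf_closure_convexHull_eq {E : Type*} [AddCommGroup E] [Module ℝ E] [TopologicalSpace E]
    (l : E →L[ℝ] ℝ) (S : Set E) :
    ⨅ z ∈ closure (convexHull ℝ S), ((l z : ℝ) : EReal) = ⨅ z ∈ S, ((l z : ℝ) : EReal) := by
  set m := ⨅ z ∈ S, ((l z : ℝ) : EReal)
  have hconvex : Convex ℝ (l ⁻¹' {t : ℝ | m ≤ t}) :=
    (IsUpperSet.ordConnected fun _ _ hst hs => hs.trans (EReal.coe_le_coe_iff.2 hst)).convex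
      |>.linear_preimage (l : E →ₗ[ℝ] ℝ)
  have hclosed : IsClosed (l ⁻¹' {t : ℝ | m ≤ t}) :=
    isClosed_le continuous_const (continuous_coe_real_ereal.comp l.continuous)
  have hbound : closure (convexHull ℝ S) ⊆ l ⁻¹' {t : ℝ | m ≤ t} :=
    closure_minimal (convexHull_min (fun z hz => show m ≤ _ from iInf₂_le z hz) hconvex) hclosed
  exact le_antisymm
    (iInf₂_mono' fun z hz => ⟨z, subset_closure (subset_convexHull ℝ S hz), le_rfl⟩)
    (le_iInf₂ fun z hz => hbound hz)

theorem scal_svComp {X Y Z : Type*} [AddCommGroup Z] [Module ℝ Z] [TopologicalSpace Z]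
    (F : Y → Set Z) (G : X → Set Y) (l : Z →L[ℝ] ℝ) (x : X) :
    scal (svComp F G) l x = ⨅ y ∈ G x, scal F l y := by
  simp only [scal, svComp, iInf_closure_convexHull_eq, iInf_iUnion]

theorem stmt_3_general {X Y Z : Type*}
    [AddCommGroup Z] [Module ℝ Z] [TopologicalSpace Z]
    (F : Y → Set Z) (G : X → Set Y) (zs : Z →L[ℝ] ℝ) (x : X) :
    scal (svComp F G) (⇑zs) x = ⨅ y ∈ G x, scal F (⇑zs) y :=
  scal_svComp F G zs x

/-- For every `z* ∈ Z₊⁺ \ {0}` and every `x`, the scalarization of the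
composition satisfies `φ_{F∘G,z*}(x) = inf_{y ∈ G(x)} φ_{F,z*}(y)`. -/
theorem stmt_3 {X Y Z : Type*}
    [AddCommGroup X] [Module ℝ X] [TopologicalSpace X] [IsTopologicalAddGroup X]
    [ContinuousSMul ℝ X] [LocallyConvexSpace ℝ X] [T2Space X]
    [AddCommGroup Y] [Module ℝ Y] [TopologicalSpace Y] [IsTopologicalAddGroup Y]
    [ContinuousSMul ℝ Y] [LocallyConvexSpace ℝ Y] [T2Space Y]
    [AddCommGroup Z] [Module ℝ Z] [TopologicalSpace Z] [IsTopologicalAddGroup Z]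
    [ContinuousSMul ℝ Z] [LocallyConvexSpace ℝ Z] [T2Space Z]
    (Yp : Set Y) (hYpconv : Convex ℝ Yp) (hYp0 : (0 : Y) ∈ Yp)
    (hYpcone : ∀ c : ℝ, 0 < c → c • Yp ⊆ Yp) (hYpcl : IsClosed Yp)
    (Zp : Set Z) (hZpconv : Convex ℝ Zp) (hZp0 : (0 : Z) ∈ Zp)
    (hZpcone : ∀ c : ℝ, 0 < c → c • Zp ⊆ Zp) (hZpcl : IsClosed Zp)
    -- `F` maps into 𝒢₊(Z) and `G` maps into 𝒫₊(Y)
    (F : Y → Set Z) (hF : ∀ y, F y = closure (convexHull ℝ (F y + Zp)))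
    (G : X → Set Y) (hG : ∀ x, G x + Yp = G x)
    -- `z* ∈ Z₊⁺ \ {0}`
    (zs : Z →L[ℝ] ℝ) (hzs : ∀ z ∈ Zp, 0 ≤ zs z) (hzs0 : zs ≠ 0)
    (x : X) :
    scal (svComp F G) (⇑zs) x = ⨅ y ∈ G x, scal F (⇑zs) y :=
  stmt_3_general F G zs x
end

section
/- Let X be preordered by a closed convex cone X₊ such that X₊♯ := {x ∈ X : ⟨x*,x⟩ > 0 for all x* ∈ X₊⁺ \ {0}} is nonempty. Let G : X → 𝒫₊(Y) be a scalarly lower semicontinuous set-valued map and let y* ∈ Y₊⁺ \ {0} be such that φ_{G,y*} is strictly decreasing, i.e., for all x¹, x² ∈ X: x² ∈ x¹ + X₊♯ if and only if φ_{G,y*}(x¹) > φ_{G,y*}(x²). Then for every y ∈ Y, the set A_y(y*) := {x ∈ X : ⟨y*,y⟩ ≥ φ_{G,y*}(x)} equals the closure of Ã_y(y*) := {x ∈ X : ⟨y*,y⟩ > φ_{G,y*}(x)}. -/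
/-!
For `k ∈ X₊♯` and `t > 0` we have `t • k ∈ X₊♯`, so `φ_{G,y*}(x + t • k) < φ_{G,y*}(x)`; letting
`t → 0⁺`, every `x` is a limit of points where `φ_{G,y*}` is strictly smaller, which gives
`A_y ⊆ closure Ã_y`. Conversely `A_y` is closed by lower semicontinuity of `φ_{G,y*}`.
-/

open Set Pointwise Filter Topology

theorem LowerSemicontinuous.setOf_le_eq_closure_setOf_lt {X α : Type*} [TopologicalSpace X]
    [LinearOrder α] {f : X → α} (hf : LowerSemicontinuous f)
    (hmin : ∀ x, x ∈ closure {x' | f x' < f x}) (c : α) :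
    {x | f x ≤ c} = closure {x | f x < c} := by
  refine Subset.antisymm (fun x hx => ?_) ?_
  · exact closure_mono (fun x' hx' => lt_of_lt_of_le hx' hx) (hmin x)
  · exact closure_minimal (fun x hx => le_of_lt hx) (hf.isClosed_preimage c)

theorem mem_closure_of_forall_add_smul_mem {E : Type*} [AddCommGroup E] [Module ℝ E]
    [TopologicalSpace E] [ContinuousAdd E] [ContinuousSMul ℝ E] {s : Set E} {x : E} (k : E)
    (h : ∀ t : ℝ, 0 < t → x + t • k ∈ s) : x ∈ closure s := by
  have hcont : Continuous fun t : ℝ => x + t • k := by fun_prop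
  have htend : Tendsto (fun t : ℝ => x + t • k) (𝓝[>] 0) (𝓝 x) := by
    simpa using (hcont.tendsto 0).mono_left nhdsWithin_le_nhds
  exact mem_closure_of_tendsto htend (eventually_nhdsWithin_of_forall h)

theorem stmt_14_general {X Y : Type*}
    [AddCommGroup X] [Module ℝ X] [TopologicalSpace X] [IsTopologicalAddGroup X]
    [ContinuousSMul ℝ X]
    [AddCommGroup Y] [Module ℝ Y] [TopologicalSpace Y]
    -- the preorder cone on `X`, with `X₊♯ ≠ ∅`
    (Xp : Set X)
    (hXsharp :
      {x : X | ∀ l : X →L[ℝ] ℝ, (∀ w ∈ Xp, 0 ≤ l w) → l ≠ 0 → 0 < l x}.Nonempty)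
    -- the preorder cone on `Y`
    (Yp : Set Y)
    -- `G : X → 𝒫₊(Y)`, scalarly lower semicontinuous
    (G : X → Set Y)
    (hGlsc : ∀ w : Y →L[ℝ] ℝ, (∀ y ∈ Yp, 0 ≤ w y) → w ≠ 0 →
      LowerSemicontinuous (scal G ⇑w))
    -- `y* ∈ Y₊⁺ \ {0}` such that `φ_{G,y*}` is strictly decreasing
    (ys : Y →L[ℝ] ℝ) (hys : ∀ y ∈ Yp, 0 ≤ ys y) (hys0 : ys ≠ 0)
    (hdec : ∀ x1 x2 : X,
      (x2 - x1 ∈ {x : X | ∀ l : X →L[ℝ] ℝ, (∀ w ∈ Xp, 0 ≤ l w) → l ≠ 0 → 0 < l x} ↔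
        scal G (⇑ys) x2 < scal G (⇑ys) x1))
    (y : Y) :
    {x : X | scal G (⇑ys) x ≤ ((ys y : ℝ) : EReal)} =
      closure {x : X | scal G (⇑ys) x < ((ys y : ℝ) : EReal)} := by
  obtain ⟨k, hk⟩ := hXsharp
  refine (hGlsc ys hys hys0).setOf_le_eq_closure_setOf_lt (fun x => ?_) _
  refine mem_closure_of_forall_add_smul_mem k (fun t ht => (hdec x (x + t • k)).1 ?_)
  intro l hl hl0
  simpa only [add_sub_cancel_left, map_smul, smul_eq_mul] using mul_pos ht (hk l hl hl0)

/-- Suppose `X₊♯ ≠ ∅` and `φ_{G,y*}` is strictly decreasing for some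
`y* ∈ Y₊⁺ \ {0}`, with `G` scalarly lower semicontinuous. Then for every `y`, the set
`A_y(y*) = {x : ⟨y*,y⟩ ≥ φ_{G,y*}(x)}` is the closure of
`Ã_y(y*) = {x : ⟨y*,y⟩ > φ_{G,y*}(x)}`. -/
theorem stmt_14 {X Y : Type*}
    [AddCommGroup X] [Module ℝ X] [TopologicalSpace X] [IsTopologicalAddGroup X]
    [ContinuousSMul ℝ X] [LocallyConvexSpace ℝ X] [T2Space X]
    [AddCommGroup Y] [Module ℝ Y] [TopologicalSpace Y] [IsTopologicalAddGroup Y]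
    [ContinuousSMul ℝ Y] [LocallyConvexSpace ℝ Y] [T2Space Y]
    -- the preorder cone on `X`, with `X₊♯ ≠ ∅`
    (Xp : Set X) (hXpconv : Convex ℝ Xp) (hXp0 : (0 : X) ∈ Xp)
    (hXpcone : ∀ c : ℝ, 0 < c → c • Xp ⊆ Xp) (hXpcl : IsClosed Xp)
    (hXsharp :
      {x : X | ∀ l : X →L[ℝ] ℝ, (∀ w ∈ Xp, 0 ≤ l w) → l ≠ 0 → 0 < l x}.Nonempty)
    -- the preorder cone on `Y`
    (Yp : Set Y) (hYpconv : Convex ℝ Yp) (hYp0 : (0 : Y) ∈ Yp)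
    (hYpcone : ∀ c : ℝ, 0 < c → c • Yp ⊆ Yp) (hYpcl : IsClosed Yp)
    -- `G : X → 𝒫₊(Y)`, scalarly lower semicontinuous
    (G : X → Set Y) (hGval : ∀ x, G x + Yp = G x)
    (hGlsc : ∀ w : Y →L[ℝ] ℝ, (∀ y ∈ Yp, 0 ≤ w y) → w ≠ 0 →
      LowerSemicontinuous (scal G ⇑w))
    -- `y* ∈ Y₊⁺ \ {0}` such that `φ_{G,y*}` is strictly decreasing
    (ys : Y →L[ℝ] ℝ) (hys : ∀ y ∈ Yp, 0 ≤ ys y) (hys0 : ys ≠ 0)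
    (hdec : ∀ x1 x2 : X,
      (x2 - x1 ∈ {x : X | ∀ l : X →L[ℝ] ℝ, (∀ w ∈ Xp, 0 ≤ l w) → l ≠ 0 → 0 < l x} ↔
        scal G (⇑ys) x2 < scal G (⇑ys) x1))
    (y : Y) :
    {x : X | scal G (⇑ys) x ≤ ((ys y : ℝ) : EReal)} =
      closure {x : X | scal G (⇑ys) x < ((ys y : ℝ) : EReal)} :=
  stmt_14_general Xp hXsharp Yp G hGlsc ys hys hys0 hdec y
end

section
/- Suppose Assumptions A and B hold, and let F : Y → 𝒢₊(Z), G : X → 𝒫₊(Y) be convex and scalarly lower semicontinuous set-valued maps. Fix x* ∈ X*, z* ∈ Z₊⁺ \ {0}, and define extended-real functions f(x,y,y*) := ⟨x*,x⟩ − φ_{F,z*}(y) if ⟨y*,y⟩ ≥ φ_{G,y*}(x) and −∞ otherwise, and f̃(x,y,y*) := ⟨x*,x⟩ − φ_{F,z*}(y) if ⟨y*,y⟩ > φ_{G,y*}(x) and −∞ otherwise. Then for every y* ∈ B_{Y*} \ {0}, sup_{(x,y) ∈ X×Y} f(x,y,y*) = sup_{(x,y) ∈ X×Y} f̃(x,y,y*).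 -/
open Set Pointwise

attribute [local instance] Classical.propDecidable

/-- The function `f(x,y) = ⟨x*,x⟩ - φ_{F,z*}(y)` if `⟨y*,y⟩ ≥ φ_{G,y*}(x)`, and `-∞`
otherwise. -/
noncomputable def fFun {X Y Z : Type*} (G : X → Set Y) (F : Y → Set Z)
    (xs : X → ℝ) (ys : Y → ℝ) (zs : Z → ℝ) (p : X × Y) : EReal :=
  if scal G ys p.1 ≤ ((ys p.2 : ℝ) : EReal) then
    ((xs p.1 : ℝ) : EReal) - scal F zs p.2
  else ⊥

/-- The function `f̃(x,y) = ⟨x*,x⟩ - φ_{F,z*}(y)` if `⟨y*,y⟩ > φ_{G,y*}(x)`, and `-∞`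
otherwise. -/
noncomputable def fTilde {X Y Z : Type*} (G : X → Set Y) (F : Y → Set Z)
    (xs : X → ℝ) (ys : Y → ℝ) (zs : Z → ℝ) (p : X × Y) : EReal :=
  if scal G ys p.1 < ((ys p.2 : ℝ) : EReal) then
    ((xs p.1 : ℝ) : EReal) - scal F zs p.2
  else ⊥

/-!
Trivially `f̃ ≤ f`. Conversely, let `⟨y*,y⟩ ≥ φ_{G,y*}(x)`. Assumption B yields `x'` with
`φ_{G,y*}(x') < ⟨y*,y⟩`, and convexity of `G` makes every point `x_λ = λ x' + (1-λ) x`,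
`λ ∈ (0,1]`, strictly feasible, so `f(x,y) = lim_{λ→0⁺} f̃(x_λ,y) ≤ sup f̃`.
-/

theorem EReal.continuous_coe_sub_const (c : EReal) : Continuous fun r : ℝ => (r : EReal) - c :=
  continuous_iff_continuousAt.2 fun r =>
    ContinuousAt.comp (f := fun r : ℝ => ((r : EReal), -c))
      (EReal.continuousAt_add (Or.inl (EReal.coe_ne_top r)) (Or.inl (EReal.coe_ne_bot r)))
      (continuous_coe_real_ereal.prodMk continuous_const).continuousAt

section Scalarization

variable {X Y : Type*}

lemma scal_le_of_mem (R : X → Set Y) (l : Y → ℝ) {x : X} {y : Y} (hy : y ∈ R x) :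
    scal R l x ≤ l y :=
  iInf₂_le y hy

lemma scal_lt_iff (R : X → Set Y) (l : Y → ℝ) {x : X} {a : EReal} :
    scal R l x < a ↔ ∃ y ∈ R x, (l y : EReal) < a := by
  simp [scal, iInf_lt_iff]

variable [AddCommGroup X] [Module ℝ X] [AddCommGroup Y] [Module ℝ Y]

lemma SVConvex.scal_segment_lt {G : X → Set Y} (hG : SVConvex G) (ys : Y →ₗ[ℝ] ℝ)
    {x x' : X} {t : ℝ} (hx : scal G ys x ≤ t) (hx' : scal G ys x' < t)
    {l : ℝ} (hl : l ∈ Ioc (0 : ℝ) 1) :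
    scal G ys (l • x' + (1 - l) • x) < t := by
  obtain ⟨s, hs, hst⟩ := EReal.exists_between_coe_real hx'
  rw [EReal.coe_lt_coe_iff] at hst
  -- the slack `l * (t - s)` gained at `x'` pays for approaching the infimum at `x`
  have hε : 0 < l * (t - s) := mul_pos hl.1 (by linarith)
  obtain ⟨y', hy'G, hy'⟩ := (scal_lt_iff G ys).1 hs
  obtain ⟨y, hyG, hy⟩ := (scal_lt_iff G ys).1
    (hx.trans_lt (EReal.coe_lt_coe_iff.2 (lt_add_of_pos_right t hε)))
  rw [EReal.coe_lt_coe_iff] at hy hy'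
  have hmem : l • y' + (1 - l) • y ∈ G (l • x' + (1 - l) • x) :=
    hG x' x l (Ioc_subset_Icc_self hl)
      (add_mem_add (smul_mem_smul_set hy'G) (smul_mem_smul_set hyG))
  refine (scal_le_of_mem G ys hmem).trans_lt (EReal.coe_lt_coe_iff.2 ?_)
  simp only [map_add, map_smul, smul_eq_mul]
  nlinarith [hl.1, hl.2]

end Scalarization

lemma fTilde_le_fFun {X Y Z : Type*} (G : X → Set Y) (F : Y → Set Z)
    (xs : X → ℝ) (ys : Y → ℝ) (zs : Z → ℝ) (p : X × Y) :
    fTilde G F xs ys zs p ≤ fFun G F xs ys zs p := by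
  unfold fTilde fFun
  split_ifs with h1 h2
  · exact le_rfl
  · exact absurd h1.le h2
  · exact bot_le
  · exact le_rfl

open Filter Topology in
lemma fFun_le_iSup_fTilde {X Y Z : Type*} [AddCommGroup X] [Module ℝ X] [AddCommGroup Y]
    [Module ℝ Y] {G : X → Set Y} (hG : SVConvex G) (F : Y → Set Z) (xs : X →ₗ[ℝ] ℝ)
    (ys : Y →ₗ[ℝ] ℝ) (zs : Z → ℝ)
    (hnomin : ∀ x (t : ℝ), scal G ys x ≤ t → ∃ x', scal G ys x' < t) (p : X × Y) :
    fFun G F xs ys zs p ≤ ⨆ q, fTilde G F xs ys zs q := by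
  obtain ⟨x, y⟩ := p
  unfold fFun
  split_ifs with h
  swap
  · exact bot_le
  obtain ⟨x', hx'⟩ := hnomin x _ h
  have hxs : Continuous fun l : ℝ => xs (l • x' + (1 - l) • x) := by
    simp only [map_add, map_smul, smul_eq_mul]
    fun_prop
  have htend : Tendsto (fun l : ℝ => (xs (l • x' + (1 - l) • x) : EReal) - scal F zs y)
      (𝓝[>] 0) (𝓝 ((xs x : EReal) - scal F zs y)) := by
    have := ((EReal.continuous_coe_sub_const (scal F zs y)).comp hxs).tendsto 0
    simp only [Function.comp_def, zero_smul, sub_zero, one_smul, zero_add] at this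
    exact this.mono_left nhdsWithin_le_nhds
  refine le_of_tendsto htend (eventually_of_mem (Ioc_mem_nhdsGT one_pos) fun l hl => ?_)
  refine le_trans (le_of_eq ?_) (le_iSup _ (l • x' + (1 - l) • x, y))
  unfold fTilde
  rw [if_pos (hG.scal_segment_lt ys h hx' hl)]

theorem stmt_15_general {X Y Z : Type*}
    [AddCommGroup X] [Module ℝ X] [TopologicalSpace X]
    [AddCommGroup Y] [Module ℝ Y] [TopologicalSpace Y]
    [AddCommGroup Z] [Module ℝ Z] [TopologicalSpace Z]
    -- Assumption A: a convex weak*-compact cone generator of `Y₊⁺`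
    (Bs : Set (WeakDual ℝ Y))
    -- `F : Y → 𝒢₊(Z)` and `G : X → 𝒫₊(Y)`, convex and scalarly lower semicontinuous
    (F : Y → Set Z)
    (G : X → Set Y)
    (hGconv : SVConvex G)
    -- Assumption B
    (Xp : Set X)
    (hAsmpB :
      (∀ ys ∈ Bs, ys ≠ (0 : WeakDual ℝ Y) → (⨅ x : X, scal G (⇑ys) x) = ⊥) ∨
      (IsClosed Xp ∧ Convex ℝ Xp ∧ (0 : X) ∈ Xp ∧ (∀ c : ℝ, 0 < c → c • Xp ⊆ Xp) ∧
        {x : X | ∀ l : X →L[ℝ] ℝ, (∀ w ∈ Xp, 0 ≤ l w) → l ≠ 0 → 0 < l x}.Nonempty ∧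
        ∀ ys ∈ Bs, ys ≠ (0 : WeakDual ℝ Y) → ∀ x1 x2 : X,
          (x2 - x1 ∈ {x : X | ∀ l : X →L[ℝ] ℝ, (∀ w ∈ Xp, 0 ≤ l w) → l ≠ 0 → 0 < l x} ↔
            scal G (⇑ys) x2 < scal G (⇑ys) x1)))
    -- the fixed dual elements
    (xs : X →L[ℝ] ℝ)
    (zs : Z →L[ℝ] ℝ) :
    ∀ ys ∈ Bs, ys ≠ (0 : WeakDual ℝ Y) →
      (⨆ p : X × Y, fFun G F (⇑xs) (⇑ys) (⇑zs) p) =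
        ⨆ p : X × Y, fTilde G F (⇑xs) (⇑ys) (⇑zs) p := by
  intro ys hys hys0
  have hnomin : ∀ x (t : ℝ), scal G ys x ≤ t → ∃ x', scal G ys x' < t := by
    intro x t hx
    rcases hAsmpB with hinf | ⟨-, -, -, -, ⟨e, he⟩, hdesc⟩
    · exact iInf_lt_iff.1 ((hinf ys hys hys0).symm ▸ EReal.bot_lt_coe t)
    · exact ⟨x + e, ((hdesc ys hys hys0 x (x + e)).1 (by simpa using he)).trans_le hx⟩
  exact le_antisymm
    (iSup_le (fFun_le_iSup_fTilde hGconv F xs.toLinearMap (ys : Y →L[ℝ] ℝ).toLinearMap zs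
      hnomin))
    (iSup_mono (fTilde_le_fFun G F _ _ _))

/-- Under Assumptions A and B, for convex and scalarly lower
semicontinuous `F : Y → 𝒢₊(Z)`, `G : X → 𝒫₊(Y)` and each `y* ∈ B_{Y*} \ {0}`,
`sup_{(x,y)} f(x,y,y*) = sup_{(x,y)} f̃(x,y,y*)`. -/
theorem stmt_15 {X Y Z : Type*}
    [AddCommGroup X] [Module ℝ X] [TopologicalSpace X] [IsTopologicalAddGroup X]
    [ContinuousSMul ℝ X] [LocallyConvexSpace ℝ X] [T2Space X]
    [AddCommGroup Y] [Module ℝ Y] [TopologicalSpace Y] [IsTopologicalAddGroup Y]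
    [ContinuousSMul ℝ Y] [LocallyConvexSpace ℝ Y] [T2Space Y]
    [AddCommGroup Z] [Module ℝ Z] [TopologicalSpace Z] [IsTopologicalAddGroup Z]
    [ContinuousSMul ℝ Z] [LocallyConvexSpace ℝ Z] [T2Space Z]
    (Yp : Set Y) (hYpconv : Convex ℝ Yp) (hYp0 : (0 : Y) ∈ Yp)
    (hYpcone : ∀ c : ℝ, 0 < c → c • Yp ⊆ Yp) (hYpcl : IsClosed Yp)
    (Zp : Set Z) (hZpconv : Convex ℝ Zp) (hZp0 : (0 : Z) ∈ Zp)
    (hZpcone : ∀ c : ℝ, 0 < c → c • Zp ⊆ Zp) (hZpcl : IsClosed Zp)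
    -- Assumption A: a convex weak*-compact cone generator of `Y₊⁺`
    (Bs : Set (WeakDual ℝ Y))
    (hBsub : ∀ b ∈ Bs, ∀ y ∈ Yp, 0 ≤ b y)
    (hBconv : Convex ℝ Bs) (hBcomp : IsCompact Bs)
    (hBgen : ∀ ys : WeakDual ℝ Y, (∀ y ∈ Yp, 0 ≤ ys y) → ys ≠ 0 →
      ∃ l : ℝ, 0 < l ∧ ∃ b ∈ Bs, ys = l • b)
    -- `F : Y → 𝒢₊(Z)` and `G : X → 𝒫₊(Y)`, convex and scalarly lower semicontinuous
    (F : Y → Set Z) (hFval : ∀ y, F y = closure (convexHull ℝ (F y + Zp)))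
    (G : X → Set Y) (hGval : ∀ x, G x + Yp = G x)
    (hFconv : SVConvex F) (hGconv : SVConvex G)
    (hFlsc : ∀ w : Z →L[ℝ] ℝ, (∀ z ∈ Zp, 0 ≤ w z) → w ≠ 0 →
      LowerSemicontinuous (scal F ⇑w))
    (hGlsc : ∀ w : WeakDual ℝ Y, (∀ y ∈ Yp, 0 ≤ w y) → w ≠ 0 →
      LowerSemicontinuous (scal G ⇑w))
    -- Assumption B
    (Xp : Set X)
    (hAsmpB :
      (∀ ys ∈ Bs, ys ≠ (0 : WeakDual ℝ Y) → (⨅ x : X, scal G (⇑ys) x) = ⊥) ∨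
      (IsClosed Xp ∧ Convex ℝ Xp ∧ (0 : X) ∈ Xp ∧ (∀ c : ℝ, 0 < c → c • Xp ⊆ Xp) ∧
        {x : X | ∀ l : X →L[ℝ] ℝ, (∀ w ∈ Xp, 0 ≤ l w) → l ≠ 0 → 0 < l x}.Nonempty ∧
        ∀ ys ∈ Bs, ys ≠ (0 : WeakDual ℝ Y) → ∀ x1 x2 : X,
          (x2 - x1 ∈ {x : X | ∀ l : X →L[ℝ] ℝ, (∀ w ∈ Xp, 0 ≤ l w) → l ≠ 0 → 0 < l x} ↔
            scal G (⇑ys) x2 < scal G (⇑ys) x1)))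
    -- the fixed dual elements
    (xs : X →L[ℝ] ℝ)
    (zs : Z →L[ℝ] ℝ) (hzs : ∀ z ∈ Zp, 0 ≤ zs z) (hzs0 : zs ≠ 0) :
    ∀ ys ∈ Bs, ys ≠ (0 : WeakDual ℝ Y) →
      (⨆ p : X × Y, fFun G F (⇑xs) (⇑ys) (⇑zs) p) =
        ⨆ p : X × Y, fTilde G F (⇑xs) (⇑ys) (⇑zs) p :=
  stmt_15_general Bs F G hGconv Xp hAsmpB xs zs
end

section
/- Let X be a topological vector space, Z a Hausdorff topological vector space preordered by a closed convex cone Z₊, and R : X → 2^Z a set-valued map all of whose values satisfy R(x) = cl(R(x) + Z₊). Then the graph gr(R) := {(x,z) : z ∈ R(x)} is closed in X×Z if and only if R is lattice-lower semicontinuous at every x ∈ X, i.e., R(x) ⊇ ⋂_{U ∈ 𝒩(X)} cl( ⋃_{x' ∈ x+U} R(x') ) for every x ∈ X, where 𝒩(X) is a neighborhood base of 0 in X. -/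
open Set Pointwise Filter

theorem mem_closure_graph_iff_of_hasBasis {X Z ι : Type*} [TopologicalSpace X]
    [TopologicalSpace Z] {R : X → Set Z} {p : ι → Prop} {s : ι → Set X} {x : X} {z : Z}
    (h : (nhds x).HasBasis p s) :
    (x, z) ∈ closure {q : X × Z | q.2 ∈ R q.1} ↔ ∀ i, p i → z ∈ closure (⋃ x' ∈ s i, R x') := by
  rw [mem_closure_iff_nhds_basis (h.prod_nhds (nhds z).basis_sets)]
  simp only [mem_closure_iff_nhds, Prod.forall, and_imp]
  constructor
  · intro hgraph i hi t ht
    obtain ⟨⟨x', z'⟩, hz', hx', hzt⟩ := hgraph i t hi ht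
    exact ⟨z', hzt, mem_biUnion hx' hz'⟩
  · intro hR i t hi ht
    obtain ⟨z', hzt, hz'⟩ := hR i hi t ht
    obtain ⟨x', hx', hz'⟩ := mem_iUnion₂.1 hz'
    exact ⟨(x', z'), hz', hx', hzt⟩

theorem mem_closure_graph_iff_of_hasBasis_zero {X Z : Type*} [AddCommGroup X]
    [TopologicalSpace X] [IsTopologicalAddGroup X] [TopologicalSpace Z] {R : X → Set Z}
    {N : Set (Set X)} (hN : (nhds (0 : X)).HasBasis (· ∈ N) id) {x : X} {z : Z} :
    (x, z) ∈ closure {q : X × Z | q.2 ∈ R q.1} ↔ z ∈ ⋂ U ∈ N, closure (⋃ u ∈ U, R (x + u)) := by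
  have hx : (nhds x).HasBasis (· ∈ N) ((x + ·) '' ·) := by
    rw [← map_add_left_nhds_zero x]
    exact hN.map _
  simp only [mem_closure_graph_iff_of_hasBasis hx, biUnion_image, mem_iInter₂]

theorem stmt_17_general {X Z : Type*}
    [AddCommGroup X] [TopologicalSpace X] [IsTopologicalAddGroup X]
    [TopologicalSpace Z]
    -- a neighborhood base `𝒩(X)` of `0 ∈ X`
    (N : Set (Set X)) (hN : (nhds (0 : X)).HasBasis (fun U : Set X => U ∈ N) id)
    (R : X → Set Z) :
    IsClosed {p : X × Z | p.2 ∈ R p.1} ↔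
      ∀ x : X, (⋂ U ∈ N, closure (⋃ u ∈ U, R (x + u))) ⊆ R x := by
  simp only [← closure_subset_iff_isClosed, subset_def, Prod.forall,
    mem_closure_graph_iff_of_hasBasis_zero hN, mem_ofPred_eq]

/-- For a set-valued map `R : X → ℱ₊(Z)` (i.e. `R x = cl(R x + Z₊)` for
all `x`), the graph of `R` is closed iff `R` is lattice-lower semicontinuous at every
point, where `𝒩(X)` is a neighborhood base of `0 ∈ X`. -/
theorem stmt_17 {X Z : Type*}
    [AddCommGroup X] [Module ℝ X] [TopologicalSpace X] [IsTopologicalAddGroup X]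
    [ContinuousSMul ℝ X]
    [AddCommGroup Z] [Module ℝ Z] [TopologicalSpace Z] [IsTopologicalAddGroup Z]
    [ContinuousSMul ℝ Z] [T2Space Z]
    -- the preorder cone on `Z`
    (Zp : Set Z) (hZpconv : Convex ℝ Zp) (hZp0 : (0 : Z) ∈ Zp)
    (hZpcone : ∀ c : ℝ, 0 < c → c • Zp ⊆ Zp) (hZpcl : IsClosed Zp)
    -- a neighborhood base `𝒩(X)` of `0 ∈ X`
    (N : Set (Set X)) (hN : (nhds (0 : X)).HasBasis (fun U : Set X => U ∈ N) id)
    -- `R : X → ℱ₊(Z)`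
    (R : X → Set Z) (hRval : ∀ x, R x = closure (R x + Zp)) :
    IsClosed {p : X × Z | p.2 ∈ R p.1} ↔
      ∀ x : X, (⋂ U ∈ N, closure (⋃ u ∈ U, R (x + u))) ⊆ R x :=
  stmt_17_general N hN R
end

section
/- Let R : X → 𝒢₊(Z) be a set-valued map. Then R is convex (λR(x¹) + (1−λ)R(x²) ⊆ R(λx¹ + (1−λ)x²) for all x¹, x² ∈ X and λ ∈ [0,1]) if and only if for every z* ∈ Z*, the scalarization φ_{R,z*} is a convex extended-real function, i.e., its epigraph {(x,r) ∈ X×ℝ : φ_{R,z*}(x) ≤ r} is convex. -/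
open Set Pointwise

/-! The direct implication holds for every convex `l`: near-optimal points `z₁ ∈ R x₁`,
`z₂ ∈ R x₂` combine to a point of `R (t • x₁ + (1 - t) • x₂)` at which `l` is at most the
combination of the two values. Conversely, a point `w` of the combination
`t • R x₁ + (1 - t) • R x₂` satisfies `scal R f (t • x₁ + (1 - t) • x₂) ≤ f w` for every
continuous functional `f`, by convexity of the epigraphs; since the values of `R` are
closed and convex, Hahn–Banach separation then puts `w` in `R (t • x₁ + (1 - t) • x₂)`. -/

section Scalarization

variable {X Z : Type*} {R : X → Set Z} {l : Z → ℝ} {x : X}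

theorem scal_le_of_mem_s18 {z : Z} (hz : z ∈ R x) : scal R l x ≤ ((l z : ℝ) : EReal) :=
  iInf₂_le z hz

theorem le_scal_of_forall_le {r : EReal} (h : ∀ z ∈ R x, r ≤ ((l z : ℝ) : EReal)) :
    r ≤ scal R l x :=
  le_iInf₂ h

theorem scal_lt_coe_iff {r : ℝ} : scal R l x < r ↔ ∃ z ∈ R x, l z < r := by
  simp only [scal, iInf_lt_iff, EReal.coe_lt_coe_iff, exists_prop]

end Scalarization

section ConvexSetMap

variable {X Z : Type*} [AddCommGroup X] [Module ℝ X] [AddCommGroup Z] [Module ℝ Z]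
  {R : X → Set Z}

theorem scal_convexCombination_le
    (hR : ∀ x1 x2 : X, ∀ t ∈ Icc (0 : ℝ) 1,
      t • R x1 + (1 - t) • R x2 ⊆ R (t • x1 + (1 - t) • x2))
    {l : Z → ℝ} (hl : ConvexOn ℝ univ l) {x1 x2 : X} {t r1 r2 : ℝ} (ht : t ∈ Icc (0 : ℝ) 1)
    (h1 : scal R l x1 < r1) (h2 : scal R l x2 < r2) :
    scal R l (t • x1 + (1 - t) • x2) ≤ ((t * r1 + (1 - t) * r2 : ℝ) : EReal) := by
  obtain ⟨z1, hz1, hlz1⟩ := scal_lt_coe_iff.1 h1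
  obtain ⟨z2, hz2, hlz2⟩ := scal_lt_coe_iff.1 h2
  have ht' : 0 ≤ 1 - t := sub_nonneg.2 ht.2
  have hmem : t • z1 + (1 - t) • z2 ∈ R (t • x1 + (1 - t) • x2) :=
    hR x1 x2 t ht (add_mem_add (smul_mem_smul_set hz1) (smul_mem_smul_set hz2))
  refine (scal_le_of_mem_s18 hmem).trans (EReal.coe_le_coe_iff.2 ?_)
  calc l (t • z1 + (1 - t) • z2) ≤ t * l z1 + (1 - t) * l z2 :=
        hl.2 (mem_univ _) (mem_univ _) ht.1 ht' (add_sub_cancel t 1)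
    _ ≤ t * r1 + (1 - t) * r2 :=
        add_le_add (mul_le_mul_of_nonneg_left hlz1.le ht.1) (mul_le_mul_of_nonneg_left hlz2.le ht')

theorem convex_epigraph_scal
    (hR : ∀ x1 x2 : X, ∀ t ∈ Icc (0 : ℝ) 1,
      t • R x1 + (1 - t) • R x2 ⊆ R (t • x1 + (1 - t) • x2))
    {l : Z → ℝ} (hl : ConvexOn ℝ univ l) :
    Convex ℝ {p : X × ℝ | scal R l p.1 ≤ ((p.2 : ℝ) : EReal)} := by
  rintro ⟨x1, s1⟩ (hp : scal R l x1 ≤ s1) ⟨x2, s2⟩ (hq : scal R l x2 ≤ s2) a b ha hb hab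
  obtain rfl : b = 1 - a := by linarith
  change scal R l (a • x1 + (1 - a) • x2) ≤ ((a * s1 + (1 - a) * s2 : ℝ) : EReal)
  refine EReal.le_of_forall_lt_iff_le.1 fun m hm => ?_
  set ε := m - (a * s1 + (1 - a) * s2)
  have hε : 0 < ε := sub_pos.2 (EReal.coe_lt_coe_iff.1 hm)
  have hlt {x : X} {s : ℝ} (h : scal R l x ≤ s) : scal R l x < ((s + ε : ℝ) : EReal) :=
    h.trans_lt (EReal.coe_lt_coe_iff.2 (lt_add_of_pos_right s hε))
  convert scal_convexCombination_le hR hl ⟨ha, by linarith⟩ (hlt hp) (hlt hq) using 2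
  ring

end ConvexSetMap

section Separation

variable {Z : Type*} [AddCommGroup Z] [Module ℝ Z] [TopologicalSpace Z] [IsTopologicalAddGroup Z]
  [ContinuousSMul ℝ Z] [LocallyConvexSpace ℝ Z]

theorem mem_of_forall_scal_le {X : Type*} {R : X → Set Z} {x : X} (hclosed : IsClosed (R x))
    (hconv : Convex ℝ (R x)) {w : Z} (h : ∀ f : Z →L[ℝ] ℝ, scal R f x ≤ ((f w : ℝ) : EReal)) :
    w ∈ R x := by
  by_contra hw
  obtain ⟨f, u, hfw, hu⟩ := geometric_hahn_banach_point_closed hconv hclosed hw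
  have hu_le : ((u : ℝ) : EReal) ≤ scal R f x :=
    le_scal_of_forall_le fun z hz => EReal.coe_le_coe_iff.2 (hu z hz).le
  exact hfw.not_ge (EReal.coe_le_coe_iff.1 (hu_le.trans (h f)))

theorem convex_setMap_of_convex_epigraph_scal {X : Type*} [AddCommGroup X] [Module ℝ X]
    {R : X → Set Z} (hclosed : ∀ x, IsClosed (R x)) (hconv : ∀ x, Convex ℝ (R x))
    (h : ∀ f : Z →L[ℝ] ℝ, Convex ℝ {p : X × ℝ | scal R f p.1 ≤ ((p.2 : ℝ) : EReal)}) :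
    ∀ x1 x2 : X, ∀ t ∈ Icc (0 : ℝ) 1,
      t • R x1 + (1 - t) • R x2 ⊆ R (t • x1 + (1 - t) • x2) := by
  rintro x1 x2 t ht _ ⟨_, ⟨z1, hz1, rfl⟩, _, ⟨z2, hz2, rfl⟩, rfl⟩
  refine mem_of_forall_scal_le (hclosed _) (hconv _) fun f => ?_
  have hmem := h f (x := (x1, f z1)) (y := (x2, f z2)) (scal_le_of_mem_s18 hz1) (scal_le_of_mem_s18 hz2)
    ht.1 (sub_nonneg.2 ht.2) (add_sub_cancel t 1)
  simpa using hmem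

end Separation

theorem stmt_18_general {X Z : Type*} [AddCommGroup X] [Module ℝ X]
    [AddCommGroup Z] [Module ℝ Z] [TopologicalSpace Z] [IsTopologicalAddGroup Z]
    [ContinuousSMul ℝ Z] [LocallyConvexSpace ℝ Z]
    -- the preorder cone on `Z`
    (Zp : Set Z)
    -- `R : X → 𝒢₊(Z)`
    (R : X → Set Z) (hRval : ∀ x, R x = closure (convexHull ℝ (R x + Zp))) :
    (∀ x1 x2 : X, ∀ l ∈ Set.Icc (0 : ℝ) 1,
        l • R x1 + (1 - l) • R x2 ⊆ R (l • x1 + (1 - l) • x2)) ↔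
      ∀ zs : Z →L[ℝ] ℝ,
        Convex ℝ {p : X × ℝ | scal R (⇑zs) p.1 ≤ ((p.2 : ℝ) : EReal)} := by
  have hclosed (x : X) : IsClosed (R x) := by
    rw [hRval]
    exact isClosed_closure
  have hconv (x : X) : Convex ℝ (R x) := by
    rw [hRval]
    exact (convex_convexHull ℝ _).closure
  exact ⟨fun hR zs => convex_epigraph_scal hR (zs.toLinearMap.convexOn convex_univ),
    convex_setMap_of_convex_epigraph_scal hclosed hconv⟩

/-- A set-valued map `R : X → 𝒢₊(Z)` is convex iff all of its
scalarizations `φ_{R,z*}`, `z* ∈ Z*`, are convex (convex epigraphs). -/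
theorem stmt_18 {X Z : Type*} [AddCommGroup X] [Module ℝ X]
    [AddCommGroup Z] [Module ℝ Z] [TopologicalSpace Z] [IsTopologicalAddGroup Z]
    [ContinuousSMul ℝ Z] [LocallyConvexSpace ℝ Z] [T2Space Z]
    -- the preorder cone on `Z`
    (Zp : Set Z) (hZpconv : Convex ℝ Zp) (hZp0 : (0 : Z) ∈ Zp)
    (hZpcone : ∀ c : ℝ, 0 < c → c • Zp ⊆ Zp) (hZpcl : IsClosed Zp)
    -- `R : X → 𝒢₊(Z)`
    (R : X → Set Z) (hRval : ∀ x, R x = closure (convexHull ℝ (R x + Zp))) :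
    (∀ x1 x2 : X, ∀ l ∈ Set.Icc (0 : ℝ) 1,
        l • R x1 + (1 - l) • R x2 ⊆ R (l • x1 + (1 - l) • x2)) ↔
      ∀ zs : Z →L[ℝ] ℝ,
        Convex ℝ {p : X × ℝ | scal R (⇑zs) p.1 ≤ ((p.2 : ℝ) : EReal)} :=
  stmt_18_general Zp R hRval
end

section
/- Let Z₊ ≠ Z, let R : X → 𝒢₊(Z) be a set-valued map, and fix x ∈ X. If R is scalarly lower semicontinuous at x, i.e., the scalarization φ_{R,z*} is lower semicontinuous at x for every z* ∈ Z₊⁺ \ {0}, then R is lattice-lower semicontinuous at x: R(x) ⊇ ⋂_{U ∈ 𝒩(X)} cl( ⋃_{x' ∈ x+U} R(x') ), where 𝒩(X) is a neighborhood base of 0 in X. -/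
/-
Suppose `z` lies in every `cl ⋃_{u ∈ U} R(x + u)` but not in `R x`. For every
`z* ∈ Z₊⁺ \ {0}` the closed half-space `{w | inf_{u ∈ U} φ_{R,z*}(x + u) ≤ z*(w)}` contains
all these unions, so scalar lower semicontinuity gives `φ_{R,z*}(x) ≤ z*(z)`. If `R x` is
nonempty, strictly separating `z` from the closed convex set `R x` contradicts this; the
separating functional is nonnegative on `Z₊` because `R x + Z₊ ⊆ R x`. If `R x = ∅`, then
`φ_{R,z*}(x) = ⊤`, and separating a point outside `Z₊` from `Z₊` yields a suitable `z*`.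
-/

open Set Pointwise Filter

lemma nonneg_of_forall_pos_lt_add_mul {a b u : ℝ} (h : ∀ t > 0, u < a + t * b) : 0 ≤ b := by
  by_contra! hb
  have ht : 0 < (u - a) / b - 1 / b := by
    rw [← sub_div]
    exact div_pos_of_neg_of_neg (by linarith [h 1 one_pos]) hb
  have := h _ ht
  rw [sub_mul, div_mul_cancel₀ _ hb.ne, div_mul_cancel₀ _ hb.ne] at this
  linarith

lemma iInf_scal_le_of_mem_closure_iUnion {Y Z : Type*} [TopologicalSpace Z]
    {R : Y → Set Z} {l : Z → ℝ} (hl : Continuous l) {s : Set Y} {z : Z}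
    (hz : z ∈ closure (⋃ y ∈ s, R y)) : ⨅ y ∈ s, scal R l y ≤ ((l z : ℝ) : EReal) := by
  refine closure_minimal (fun w hw => ?_)
    (isClosed_le continuous_const (continuous_coe_real_ereal.comp hl)) hz
  obtain ⟨y, hy, hwy⟩ := mem_iUnion₂.1 hw
  exact (iInf₂_le y hy : ⨅ y ∈ s, scal R l y ≤ scal R l y).trans (iInf₂_le w hwy)

section Separation

variable {Z : Type*} [AddCommGroup Z] [Module ℝ Z] [TopologicalSpace Z]
  [IsTopologicalAddGroup Z] [ContinuousSMul ℝ Z] [LocallyConvexSpace ℝ Z]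

/-- The separating functional is bounded below on `S`, hence nonnegative along the rays
`w + t • p ⊆ S`. -/
lemma exists_nonneg_on_strictly_separating {S C : Set Z} (hSconv : Convex ℝ S)
    (hScl : IsClosed S) {w : Z} (hw : w ∈ S) (hray : ∀ p ∈ C, ∀ t : ℝ, 0 < t → w + t • p ∈ S)
    {z : Z} (hz : z ∉ S) :
    ∃ (f : Z →L[ℝ] ℝ) (u : ℝ), f ≠ 0 ∧ (∀ p ∈ C, 0 ≤ f p) ∧ f z < u ∧ ∀ s ∈ S, u < f s := by
  obtain ⟨f, u, hfz, hfS⟩ := geometric_hahn_banach_point_closed hSconv hScl hz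
  refine ⟨f, u, fun hf => ?_, fun p hp => ?_, hfz, hfS⟩
  · have := hfS w hw
    simp only [hf, zero_apply] at hfz this
    linarith
  · refine nonneg_of_forall_pos_lt_add_mul (a := f w) (u := u) fun t ht => ?_
    simpa only [map_add, map_smul, smul_eq_mul] using hfS _ (hray p hp t ht)

end Separation

lemma isClosed_convex_add_subset_of_eq_closure_convexHull {Z : Type*} [AddCommGroup Z]
    [Module ℝ Z] [TopologicalSpace Z] [IsTopologicalAddGroup Z] [ContinuousSMul ℝ Z]
    {S C : Set Z} (h : S = closure (convexHull ℝ (S + C))) :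
    IsClosed S ∧ Convex ℝ S ∧ S + C ⊆ S := by
  refine ⟨h ▸ isClosed_closure, h ▸ (convex_convexHull ℝ _).closure, ?_⟩
  conv_rhs => rw [h]
  exact (subset_convexHull ℝ _).trans subset_closure

theorem stmt_19_general {X Z : Type*}
    [AddCommGroup X]
    [AddCommGroup Z] [Module ℝ Z] [TopologicalSpace Z] [IsTopologicalAddGroup Z]
    [ContinuousSMul ℝ Z] [LocallyConvexSpace ℝ Z]
    -- the preorder cone on `Z`, a proper subset of `Z`
    (Zp : Set Z) (hZpconv : Convex ℝ Zp) (hZp0 : (0 : Z) ∈ Zp)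
    (hZpcone : ∀ c : ℝ, 0 < c → c • Zp ⊆ Zp) (hZpcl : IsClosed Zp)
    (hZpne : Zp ≠ (univ : Set Z))
    -- a neighborhood base `𝒩(X)` of `0 ∈ X`
    (N : Set (Set X))
    -- `R : X → 𝒢₊(Z)`
    (R : X → Set Z) (hRval : ∀ x', R x' = closure (convexHull ℝ (R x' + Zp)))
    (x : X)
    -- `R` is scalarly lower semicontinuous at `x`
    (hlsc : ∀ zs : Z →L[ℝ] ℝ, (∀ z ∈ Zp, 0 ≤ zs z) → zs ≠ 0 →
      scal R (⇑zs) x ≤ ⨆ U ∈ N, ⨅ u ∈ U, scal R (⇑zs) (x + u)) :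
    (⋂ U ∈ N, closure (⋃ u ∈ U, R (x + u))) ⊆ R x := by
  intro z hz
  by_contra hzR
  have hscal_le : ∀ f : Z →L[ℝ] ℝ, (∀ p ∈ Zp, 0 ≤ f p) → f ≠ 0 → scal R f x ≤ (f z : EReal) :=
    fun f hpos hne => (hlsc f hpos hne).trans <| iSup₂_le fun U hU =>
      iInf_scal_le_of_mem_closure_iUnion (R := fun u => R (x + u)) f.continuous
        (mem_iInter₂.1 hz U hU)
  rcases (R x).eq_empty_or_nonempty with hRe | ⟨w, hw⟩
  · obtain ⟨z₀, hz₀⟩ := (ne_univ_iff_exists_notMem Zp).1 hZpne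
    obtain ⟨f, -, hne, hpos, -⟩ := exists_nonneg_on_strictly_separating hZpconv hZpcl hZp0
      (fun p hp t ht => by simpa using hZpcone t ht (smul_mem_smul_set hp)) hz₀
    simpa [scal, hRe] using hscal_le f hpos hne
  · obtain ⟨hRcl, hRconv, hRadd⟩ := isClosed_convex_add_subset_of_eq_closure_convexHull (hRval x)
    obtain ⟨f, u, hne, hpos, hfz, hfR⟩ := exists_nonneg_on_strictly_separating hRconv hRcl hw
      (fun p hp t ht => hRadd (add_mem_add hw (hZpcone t ht (smul_mem_smul_set hp)))) hzR
    have hu : (u : EReal) ≤ scal R f x := le_iInf₂ fun s hs => EReal.coe_le_coe (hfR s hs).le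
    have := hu.trans (hscal_le f hpos hne)
    norm_cast at this
    linarith

/-- Let `Z₊ ≠ Z` and `R : X → 𝒢₊(Z)`. If `R` is scalarly lower
semicontinuous at `x` (i.e. `φ_{R,z*}(x) ≤ sup_{U ∈ 𝒩(X)} inf_{x' ∈ x+U} φ_{R,z*}(x')`
for every `z* ∈ Z₊⁺ \ {0}`), then `R` is lattice-lower semicontinuous at `x`. -/
theorem stmt_19 {X Z : Type*}
    [AddCommGroup X] [Module ℝ X] [TopologicalSpace X] [IsTopologicalAddGroup X]
    [ContinuousSMul ℝ X]
    [AddCommGroup Z] [Module ℝ Z] [TopologicalSpace Z] [IsTopologicalAddGroup Z]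
    [ContinuousSMul ℝ Z] [LocallyConvexSpace ℝ Z] [T2Space Z]
    -- the preorder cone on `Z`, a proper subset of `Z`
    (Zp : Set Z) (hZpconv : Convex ℝ Zp) (hZp0 : (0 : Z) ∈ Zp)
    (hZpcone : ∀ c : ℝ, 0 < c → c • Zp ⊆ Zp) (hZpcl : IsClosed Zp)
    (hZpne : Zp ≠ (univ : Set Z))
    -- a neighborhood base `𝒩(X)` of `0 ∈ X`
    (N : Set (Set X)) (hN : (nhds (0 : X)).HasBasis (fun U : Set X => U ∈ N) id)
    -- `R : X → 𝒢₊(Z)`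
    (R : X → Set Z) (hRval : ∀ x', R x' = closure (convexHull ℝ (R x' + Zp)))
    (x : X)
    -- `R` is scalarly lower semicontinuous at `x`
    (hlsc : ∀ zs : Z →L[ℝ] ℝ, (∀ z ∈ Zp, 0 ≤ zs z) → zs ≠ 0 →
      scal R (⇑zs) x ≤ ⨆ U ∈ N, ⨅ u ∈ U, scal R (⇑zs) (x + u)) :
    (⋂ U ∈ N, closure (⋃ u ∈ U, R (x + u))) ⊆ R x :=
  stmt_19_general Zp hZpconv hZp0 hZpcone hZpcl hZpne N R hRval x hlsc
end
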